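/- Let G be an infinite, connected, locally finite simplicial graph with vertex set V. Then the image Δ_G(ℝ^V) is dense in ℝ^V in the prodiscrete topology: for every g : V → ℝ and every finite F ⊆ V there exists f : V → ℝ such that Δ_G(f) agrees with g on F. -/

import Mathlib

open SimpleGraph

noncomputable def lap {V : Type*} (G : SimpleGraph V) [G.LocallyFinite] (f : V → ℝ) (v : V) : ℝ :=
  f v - (1 / (G.degree v : ℝ)) * ∑ w ∈ G.neighborFinset v, f w

/-! Restricting `Δ_G` to the coordinates in `F` is a linear map `ℝ^V → ℝ^F`; if it were not onto,
some nonzero `μ` supported on `F` would annihilate its range. Testing against the indicator of a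
vertex shows that `ν := μ / deg` is harmonic. A finitely supported function on an infinite graph
attains its maximum, and by the maximum principle a harmonic function on a connected graph
attaining its maximum is constant; being zero outside a finite set, `ν`, hence `μ`, vanishes. -/

theorem LinearMap.exists_eqOn_of_forall_sum_mul_eq_zero {K M V : Type*} [Field K]
    [AddCommGroup M] [Module K M] (T : M →ₗ[K] V → K) (F : Finset V)
    (h : ∀ μ : V → K, (∀ v ∉ F, μ v = 0) → (∀ x, ∑ v ∈ F, μ v * T x v = 0) → μ = 0)
    (g : V → K) : ∃ x, Set.EqOn (T x) g F := by
  classical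
  let R := (LinearMap.funLeft K K ((↑) : F → V)).comp T
  suffices hR : Function.Surjective R by
    obtain ⟨x, hx⟩ := hR fun i => g i
    exact ⟨x, fun v hv => congrFun hx ⟨v, hv⟩⟩
  by_contra hR
  rw [← LinearMap.range_eq_top, ← Ne, ← lt_top_iff_ne_top] at hR
  obtain ⟨φ, hφ, hle⟩ := (LinearMap.range R).exists_le_ker_of_lt_top hR
  let μ : V → K := fun v => φ fun i => if v = i then 1 else 0
  have hφμ : ∀ y, φ y = ∑ i : F, y i * μ i := by
    intro y
    rw [LinearMap.pi_apply_eq_sum_univ φ y]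
    refine Finset.sum_congr rfl fun i _ => ?_
    simp only [μ, smul_eq_mul, Subtype.coe_inj]
  have hμ : ∀ v ∉ F, μ v = 0 := by
    intro v hv
    have : (fun i : F => if v = i then (1 : K) else 0) = 0 :=
      funext fun i => if_neg fun hi : v = i => hv (hi ▸ i.2)
    simp only [μ, this, map_zero]
  have hann : ∀ x, ∑ v ∈ F, μ v * T x v = 0 := by
    intro x
    rw [← Finset.sum_coe_sort F]
    simpa [R, hφμ, mul_comm] using hle ⟨x, rfl⟩
  exact hφ <| LinearMap.ext fun y => by simp [hφμ, h μ hμ hann]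

namespace SimpleGraph

variable {V : Type*} {G : SimpleGraph V} [G.LocallyFinite]

variable (G) in
noncomputable def lapLinearMap : (V → ℝ) →ₗ[ℝ] V → ℝ where
  toFun := lap G
  map_add' f₁ f₂ := by
    funext v
    simp only [lap, Pi.add_apply, Finset.sum_add_distrib]
    ring
  map_smul' c f := by
    funext v
    simp only [lap, Pi.smul_apply, smul_eq_mul, RingHom.id_apply, ← Finset.mul_sum]
    ring

theorem lap_pi_single [DecidableEq V] (u v : V) :
    lap G (Pi.single u 1 : V → ℝ) v
      = (Pi.single u 1 : V → ℝ) v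
        - if v ∈ G.neighborFinset u then 1 / (G.degree v : ℝ) else 0 := by
  have hmem : u ∈ G.neighborFinset v ↔ v ∈ G.neighborFinset u := by simp [G.adj_comm]
  simp only [lap, Finset.sum_pi_single', mul_ite, mul_one, mul_zero, hmem]

theorem sum_mul_lap_pi_single [DecidableEq V] {μ : V → ℝ} {F : Finset V}
    (hμ : ∀ v ∉ F, μ v = 0) (u : V) :
    ∑ v ∈ F, μ v * lap G (Pi.single u 1 : V → ℝ) v
      = μ u - ∑ w ∈ G.neighborFinset u, μ w / (G.degree w : ℝ) := by
  have hdiag : ∑ v ∈ F, μ v * (Pi.single u 1 : V → ℝ) v = μ u := by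
    by_cases hu : u ∈ F
    · simp [Pi.single_apply, hu]
    · simp [Pi.single_apply, hu, hμ u hu]
  have hnbr : ∑ v ∈ F, (if v ∈ G.neighborFinset u then μ v / (G.degree v : ℝ) else 0)
      = ∑ w ∈ G.neighborFinset u, μ w / (G.degree w : ℝ) := by
    rw [Finset.sum_ite_mem, Finset.inter_comm]
    refine Finset.sum_subset Finset.inter_subset_left fun w _ hw => ?_
    simp [hμ w fun hwF => hw (Finset.mem_inter.2 ⟨‹_›, hwF⟩)]
  simp only [lap_pi_single, mul_sub, Finset.sum_sub_distrib, hdiag, ← hnbr, mul_ite, mul_zero]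
  congr 1
  refine Finset.sum_congr rfl fun v _ => ?_
  split_ifs <;> ring

theorem eq_of_adj_of_lap_eq_zero_of_forall_le {f : V → ℝ} {v w : V} (hv : lap G f v = 0)
    (hmax : ∀ u, f u ≤ f v) (hvw : G.Adj v w) : f w = f v := by
  have hdeg : (0 : ℝ) < G.degree v := by exact_mod_cast hvw.degree_pos_left
  have hsum : ∑ u ∈ G.neighborFinset v, f u = ∑ _u ∈ G.neighborFinset v, f v := by
    rw [Finset.sum_const, card_neighborFinset_eq_degree, nsmul_eq_mul]
    unfold lap at hv
    field_simp at hv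
    linarith
  exact (Finset.sum_eq_sum_iff_of_le fun u _ => hmax u).1 hsum w
    ((G.mem_neighborFinset v w).2 hvw)

theorem Preconnected.eq_of_lap_eq_zero_of_forall_le (hG : G.Preconnected) {f : V → ℝ}
    (hf : ∀ u, lap G f u = 0) {v : V} (hmax : ∀ u, f u ≤ f v) (u : V) : f u = f v := by
  induction (G.reachable_iff_reflTransGen v u).1 (hG v u) with
  | refl => rfl
  | tail _ hbc ih =>
    exact (eq_of_adj_of_lap_eq_zero_of_forall_le (hf _) (ih ▸ hmax) hbc).trans ih

theorem Preconnected.eq_zero_of_lap_eq_zero [Infinite V] (hG : G.Preconnected) {f : V → ℝ}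
    (hfin : (Function.support f).Finite) (hf : ∀ u, lap G f u = 0) : f = 0 := by
  classical
  obtain ⟨u₀, hu₀⟩ := Infinite.exists_notMem_finset hfin.toFinset
  have hfu₀ : f u₀ = 0 := by simpa using hu₀
  obtain ⟨v, -, hv⟩ :=
    (insert u₀ hfin.toFinset).exists_max_image f ⟨u₀, Finset.mem_insert_self _ _⟩
  have hmax : ∀ u, f u ≤ f v := by
    intro u
    by_cases hu : f u = 0
    · exact hu ▸ hfu₀ ▸ hv u₀ (Finset.mem_insert_self _ _)
    · exact hv u (Finset.mem_insert_of_mem (by simpa using hu))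
  funext u
  rw [hG.eq_of_lap_eq_zero_of_forall_le hf hmax u, ← hG.eq_of_lap_eq_zero_of_forall_le hf hmax u₀,
    hfu₀, Pi.zero_apply]

theorem Preconnected.eq_zero_of_forall_sum_mul_lap_eq_zero [Infinite V] (hG : G.Preconnected)
    {μ : V → ℝ} {F : Finset V} (hμ : ∀ v ∉ F, μ v = 0)
    (hann : ∀ f, ∑ v ∈ F, μ v * lap G f v = 0) : μ = 0 := by
  classical
  let ν : V → ℝ := fun v => μ v / G.degree v
  have hμν : ∀ u, μ u = ∑ w ∈ G.neighborFinset u, ν w := fun u => by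
    simpa [sub_eq_zero, sum_mul_lap_pi_single hμ] using hann (Pi.single u 1 : V → ℝ)
  have hν : ν = 0 := by
    refine hG.eq_zero_of_lap_eq_zero ?_ fun u => ?_
    · refine F.finite_toSet.subset fun v hv => ?_
      by_contra hvF
      exact hv (by simp [ν, hμ v hvF])
    · simp only [lap, ← hμν, ν]
      ring
  funext u
  simp [hμν u, hν]

end SimpleGraph

theorem stmt11 {V : Type*} [Infinite V] (G : SimpleGraph V) [G.LocallyFinite]
    (hconn : G.Connected) :
    ∀ (g : V → ℝ) (F : Finset V), ∃ f : V → ℝ, ∀ v ∈ F, lap G f v = g v :=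
  fun g F => (lapLinearMap G).exists_eqOn_of_forall_sum_mul_eq_zero F
    (fun _ hμ hann => hconn.preconnected.eq_zero_of_forall_sum_mul_lap_eq_zero hμ hann) g
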